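/- arXiv:2310.01761 — 5 statements merged into one kernel-verified Lean document; each statement's English description precedes it below -/
import Mathlib

section
/- Let L > 0, α > 0, ω, γ ∈ ℝ, and let u : ℝ × ℝ → ℝ be a smooth function, L-periodic in its first (space) variable, satisfying the Dullin–Gottwald–Holm equation (1 − α²∂ₓ²)uₜ + 2ω uₓ + 3u uₓ + γ uₓₓₓ = α²(2 uₓ uₓₓ + u uₓₓₓ) on ℝ × ℝ. Then the energy E(u(·,t)) = (1/2)∫₀ᴸ (u(x,t)² + α² uₓ(x,t)²) dx is independent of t. -/
open MeasureTheory intervalIntegral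

noncomputable section DGHAux

/-- Directional partial derivative of a function on `ℝ × ℝ`. -/
def pd (v : ℝ × ℝ) (f : ℝ × ℝ → ℝ) : ℝ × ℝ → ℝ := fun p => fderiv ℝ f p v

lemma pd_contDiff {f : ℝ × ℝ → ℝ} (hf : ContDiff ℝ (⊤ : ℕ∞) f) (v : ℝ × ℝ) :
    ContDiff ℝ (⊤ : ℕ∞) (pd v f) :=
  (ContinuousLinearMap.apply ℝ ℝ v).contDiff.comp (hf.fderiv_right (by simp))

lemma hasDerivAt_slice_x {f : ℝ × ℝ → ℝ} (hf : ContDiff ℝ (⊤ : ℕ∞) f) (x t : ℝ) :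
    HasDerivAt (fun y => f (y, t)) (pd (1, 0) f (x, t)) x := by
  have h := (hf.differentiable (by simp) (x, t)).hasFDerivAt
  have ht : HasDerivAt (fun y : ℝ => (y, t)) ((1 : ℝ), (0 : ℝ)) x :=
    (hasDerivAt_id x).prodMk (hasDerivAt_const x t)
  exact h.comp_hasDerivAt x ht

lemma hasDerivAt_slice_t {f : ℝ × ℝ → ℝ} (hf : ContDiff ℝ (⊤ : ℕ∞) f) (x t : ℝ) :
    HasDerivAt (fun s => f (x, s)) (pd (0, 1) f (x, t)) t := by
  have h := (hf.differentiable (by simp) (x, t)).hasFDerivAt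
  have ht : HasDerivAt (fun s : ℝ => ((x : ℝ), s)) ((0 : ℝ), (1 : ℝ)) t :=
    (hasDerivAt_const t x).prodMk (hasDerivAt_id t)
  exact h.comp_hasDerivAt t ht

lemma pd_comm {f : ℝ × ℝ → ℝ} (hf : ContDiff ℝ (⊤ : ℕ∞) f) (v w p : ℝ × ℝ) :
    pd w (pd v f) p = pd v (pd w f) p := by
  have hdf : ContDiff ℝ (⊤ : ℕ∞) (fderiv ℝ f) := hf.fderiv_right (by simp)
  have hdfp : HasFDerivAt (fderiv ℝ f) (fderiv ℝ (fderiv ℝ f) p) p :=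
    (hdf.differentiable (by simp) p).hasFDerivAt
  have key : ∀ a b : ℝ × ℝ, fderiv ℝ (fderiv ℝ f) p a b = fderiv ℝ (fderiv ℝ f) p b a :=
    fun a b =>
      second_derivative_symmetric (fun q => (hf.differentiable (by simp) q).hasFDerivAt) hdfp a b
  have h1 : ∀ v : ℝ × ℝ, HasFDerivAt (pd v f)
      ((ContinuousLinearMap.apply ℝ ℝ v).comp (fderiv ℝ (fderiv ℝ f) p)) p :=
    fun v => (ContinuousLinearMap.apply ℝ ℝ v).hasFDerivAt.comp p hdfp
  calc pd w (pd v f) p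
      = fderiv ℝ (fderiv ℝ f) p w v := by
        show fderiv ℝ (pd v f) p w = _
        rw [(h1 v).fderiv]; rfl
    _ = fderiv ℝ (fderiv ℝ f) p v w := key w v
    _ = pd v (pd w f) p := by
        show _ = fderiv ℝ (pd w f) p v
        rw [(h1 w).fderiv]; rfl

lemma fderiv_periodic' {f : ℝ × ℝ → ℝ} (hf : ContDiff ℝ (⊤ : ℕ∞) f) (c : ℝ × ℝ)
    (hper : ∀ p, f (p + c) = f p) (p : ℝ × ℝ) : fderiv ℝ f (p + c) = fderiv ℝ f p := by
  have h0 : HasFDerivAt (fun q : ℝ × ℝ => q + c) (ContinuousLinearMap.id ℝ (ℝ × ℝ)) p :=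
    (hasFDerivAt_id p).add_const c
  have h1 := ((hf.differentiable (by simp) (p + c)).hasFDerivAt).comp p h0
  rw [ContinuousLinearMap.comp_id] at h1
  have h2 : f ∘ (fun q : ℝ × ℝ => q + c) = f := funext fun q => hper q
  rw [h2] at h1
  exact h1.fderiv.symm

lemma pd_periodic {f : ℝ × ℝ → ℝ} (hf : ContDiff ℝ (⊤ : ℕ∞) f) {c : ℝ × ℝ}
    (hper : ∀ p, f (p + c) = f p) (v p : ℝ × ℝ) : pd v f (p + c) = pd v f p := by
  show fderiv ℝ f (p + c) v = fderiv ℝ f p v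
  rw [fderiv_periodic' hf c hper p]

lemma iteratedDeriv_slice_two {f : ℝ × ℝ → ℝ} (hf : ContDiff ℝ (⊤ : ℕ∞) f) (x t : ℝ) :
    iteratedDeriv 2 (fun y => f (y, t)) x = pd (1, 0) (pd (1, 0) f) (x, t) := by
  have h1 : deriv (fun y => f (y, t)) = fun y => pd (1, 0) f (y, t) :=
    funext fun y => (hasDerivAt_slice_x hf y t).deriv
  have h2 : deriv (fun y => pd (1, 0) f (y, t)) = fun y => pd (1, 0) (pd (1, 0) f) (y, t) :=
    funext fun y => (hasDerivAt_slice_x (pd_contDiff hf _) y t).deriv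
  rw [show (2 : ℕ) = 1 + 1 by norm_num, iteratedDeriv_succ, iteratedDeriv_one, h1, h2]

lemma iteratedDeriv_slice_three {f : ℝ × ℝ → ℝ} (hf : ContDiff ℝ (⊤ : ℕ∞) f) (x t : ℝ) :
    iteratedDeriv 3 (fun y => f (y, t)) x = pd (1, 0) (pd (1, 0) (pd (1, 0) f)) (x, t) := by
  have h12 : iteratedDeriv 2 (fun y => f (y, t)) = fun y => pd (1, 0) (pd (1, 0) f) (y, t) :=
    funext fun y => iteratedDeriv_slice_two hf y t
  have h3 : deriv (fun y => pd (1, 0) (pd (1, 0) f) (y, t))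
      = fun y => pd (1, 0) (pd (1, 0) (pd (1, 0) f)) (y, t) :=
    funext fun y => (hasDerivAt_slice_x (pd_contDiff (pd_contDiff hf _) _) y t).deriv
  rw [show (3 : ℕ) = 2 + 1 by norm_num, iteratedDeriv_succ, h12, h3]

end DGHAux

/-- Conservation of the energy `E(u) = (1/2)∫₀ᴸ (u² + α² uₓ²) dx` for smooth spatially
`L`-periodic solutions of the Dullin–Gottwald–Holm equation
`(1 − α²∂ₓ²)uₜ + 2ω uₓ + 3u uₓ + γ uₓₓₓ = α²(2 uₓ uₓₓ + u uₓₓₓ)`. -/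
theorem dgh_energy_conserved
    (L α ω γ : ℝ) (hL : 0 < L) (hα : 0 < α)
    (u : ℝ × ℝ → ℝ)
    (hsmooth : ContDiff ℝ (⊤ : ℕ∞) u)
    (hper : ∀ x t : ℝ, u (x + L, t) = u (x, t))
    (hPDE : ∀ x t : ℝ,
      deriv (fun s => u (x, s)) t
        - α ^ 2 * iteratedDeriv 2 (fun y => deriv (fun s => u (y, s)) t) x
        + 2 * ω * deriv (fun y => u (y, t)) x
        + 3 * u (x, t) * deriv (fun y => u (y, t)) x
        + γ * iteratedDeriv 3 (fun y => u (y, t)) x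
      = α ^ 2 * (2 * deriv (fun y => u (y, t)) x
            * iteratedDeriv 2 (fun y => u (y, t)) x
          + u (x, t) * iteratedDeriv 3 (fun y => u (y, t)) x)) :
    ∀ t : ℝ,
      (1 / 2) * ∫ x in (0:ℝ)..L,
          (u (x, t) ^ 2 + α ^ 2 * (deriv (fun y => u (y, t)) x) ^ 2)
      = (1 / 2) * ∫ x in (0:ℝ)..L,
          (u (x, 0) ^ 2 + α ^ 2 * (deriv (fun y => u (y, 0)) x) ^ 2) := by
  intro t
  -- smoothness of the various partial derivatives
  have hu1 : ContDiff ℝ (⊤ : ℕ∞) (pd (1, 0) u) := pd_contDiff hsmooth _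
  have hu2 : ContDiff ℝ (⊤ : ℕ∞) (pd (1, 0) (pd (1, 0) u)) := pd_contDiff hu1 _
  have hw : ContDiff ℝ (⊤ : ℕ∞) (pd (0, 1) u) := pd_contDiff hsmooth _
  have hw1 : ContDiff ℝ (⊤ : ℕ∞) (pd (1, 0) (pd (0, 1) u)) := pd_contDiff hw _
  have hgs : ContDiff ℝ (⊤ : ℕ∞) (fun p : ℝ × ℝ => u p ^ 2 + α ^ 2 * pd (1, 0) u p ^ 2) :=
    (hsmooth.pow 2).add (contDiff_const.mul (hu1.pow 2))
  -- slice derivative identities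
  have hder : ∀ s : ℝ, deriv (fun y => u (y, s)) = fun y => pd (1, 0) u (y, s) :=
    fun s => funext fun y => (hasDerivAt_slice_x hsmooth y s).deriv
  have hslt : ∀ y s : ℝ, deriv (fun r => u (y, r)) s = pd (0, 1) u (y, s) :=
    fun y s => (hasDerivAt_slice_t hsmooth y s).deriv
  -- the PDE in terms of `pd`
  have hPDE' : ∀ x s : ℝ,
      pd (0, 1) u (x, s)
        - α ^ 2 * pd (1, 0) (pd (1, 0) (pd (0, 1) u)) (x, s)
        + 2 * ω * pd (1, 0) u (x, s)
        + 3 * u (x, s) * pd (1, 0) u (x, s)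
        + γ * pd (1, 0) (pd (1, 0) (pd (1, 0) u)) (x, s)
      = α ^ 2 * (2 * pd (1, 0) u (x, s) * pd (1, 0) (pd (1, 0) u) (x, s)
          + u (x, s) * pd (1, 0) (pd (1, 0) (pd (1, 0) u)) (x, s)) := by
    intro x s
    have h := hPDE x s
    simp only [hslt] at h
    simp only [hder] at h
    rw [iteratedDeriv_slice_two hw x s, iteratedDeriv_slice_two hsmooth x s,
      iteratedDeriv_slice_three hsmooth x s] at h
    exact h
  -- time derivative of the energy density
  have hptg : ∀ x s : ℝ,
      pd (0, 1) (fun p : ℝ × ℝ => u p ^ 2 + α ^ 2 * pd (1, 0) u p ^ 2) (x, s)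
        = 2 * u (x, s) * pd (0, 1) u (x, s)
          + α ^ 2 * (2 * pd (1, 0) u (x, s) * pd (1, 0) (pd (0, 1) u) (x, s)) := by
    intro x s
    have h0 := hasDerivAt_slice_t hsmooth x s
    have h1 := hasDerivAt_slice_t hu1 x s
    rw [pd_comm hsmooth ((1 : ℝ), (0 : ℝ)) ((0 : ℝ), (1 : ℝ)) (x, s)] at h1
    have H := (h0.pow 2).add ((h1.pow 2).const_mul (α ^ 2))
    have hs := hasDerivAt_slice_t hgs x s
    have heq := hs.unique H
    rw [heq]
    push_cast
    ring
  -- spatial periodicity of all the derivatives involved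
  have hperu : ∀ p : ℝ × ℝ, u (p + ((L : ℝ), (0 : ℝ))) = u p := by
    intro p
    have : p + ((L : ℝ), (0 : ℝ)) = (p.1 + L, p.2) := by simp [Prod.ext_iff]
    rw [this]
    simpa using hper p.1 p.2
  have hperu1 := pd_periodic hsmooth hperu ((1 : ℝ), (0 : ℝ))
  have hperu2 := pd_periodic hu1 hperu1 ((1 : ℝ), (0 : ℝ))
  have hperw := pd_periodic hsmooth hperu ((0 : ℝ), (1 : ℝ))
  have hperw1 := pd_periodic hw hperw ((1 : ℝ), (0 : ℝ))
  -- key step : the time derivative of the energy vanishes, as an integral of an x-derivative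
  have hkey : ∀ s : ℝ,
      (∫ x in (0:ℝ)..L,
        pd (0, 1) (fun p : ℝ × ℝ => u p ^ 2 + α ^ 2 * pd (1, 0) u p ^ 2) (x, s)) = 0 := by
    intro s
    set G : ℝ → ℝ := fun x =>
      2 * α ^ 2 * (u (x, s) * pd (1, 0) (pd (0, 1) u) (x, s))
        + (-(2 * ω)) * u (x, s) ^ 2
        + (-2 : ℝ) * u (x, s) ^ 3
        + (-(2 * γ)) * (u (x, s) * pd (1, 0) (pd (1, 0) u) (x, s))
        + γ * pd (1, 0) u (x, s) ^ 2
        + 2 * α ^ 2 * (u (x, s) ^ 2 * pd (1, 0) (pd (1, 0) u) (x, s)) with hGdef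
    have hGd : ∀ x : ℝ, HasDerivAt G
        (pd (0, 1) (fun p : ℝ × ℝ => u p ^ 2 + α ^ 2 * pd (1, 0) u p ^ 2) (x, s)) x := by
      intro x
      have h0 := hasDerivAt_slice_x hsmooth x s
      have h1 := hasDerivAt_slice_x hu1 x s
      have h2 := hasDerivAt_slice_x hu2 x s
      have hw1d := hasDerivAt_slice_x hw1 x s
      have T1 := (h0.mul hw1d).const_mul (2 * α ^ 2)
      have T2 := (h0.pow 2).const_mul (-(2 * ω))
      have T3 := (h0.pow 3).const_mul (-2 : ℝ)
      have T4 := (h0.mul h2).const_mul (-(2 * γ))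
      have T5 := (h1.pow 2).const_mul γ
      have T6 := ((h0.pow 2).mul h2).const_mul (2 * α ^ 2)
      have H := ((((T1.add T2).add T3).add T4).add T5).add T6
      rw [hptg x s]
      refine H.congr_deriv (Eq.symm ?_)
      push_cast [Pi.pow_apply]
      linear_combination (2 * u (x, s)) * hPDE' x s
    have hcont : Continuous fun x =>
        pd (0, 1) (fun p : ℝ × ℝ => u p ^ 2 + α ^ 2 * pd (1, 0) u p ^ 2) (x, s) :=
      (pd_contDiff hgs _).continuous.comp (continuous_id.prodMk continuous_const)
    rw [intervalIntegral.integral_eq_sub_of_hasDerivAt (fun x _ => hGd x)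
      (hcont.intervalIntegrable 0 L)]
    have e0 : u ((L : ℝ), s) = u (0, s) := by simpa using hper 0 s
    have e1 : pd (1, 0) u ((L : ℝ), s) = pd (1, 0) u (0, s) := by
      simpa using hperu1 ((0 : ℝ), s)
    have e2 : pd (1, 0) (pd (1, 0) u) ((L : ℝ), s) = pd (1, 0) (pd (1, 0) u) (0, s) := by
      simpa using hperu2 ((0 : ℝ), s)
    have ew1 : pd (1, 0) (pd (0, 1) u) ((L : ℝ), s) = pd (1, 0) (pd (0, 1) u) (0, s) := by
      simpa using hperw1 ((0 : ℝ), s)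
    have : G L = G 0 := by simp only [hGdef, e0, e1, e2, ew1]
    rw [this, sub_self]
  -- differentiation under the integral sign
  have hE : ∀ t₀ : ℝ,
      HasDerivAt (fun r => ∫ x in (0:ℝ)..L,
        (u (x, r) ^ 2 + α ^ 2 * pd (1, 0) u (x, r) ^ 2)) 0 t₀ := by
    intro t₀
    have hcontg' : Continuous
        (pd (0, 1) (fun p : ℝ × ℝ => u p ^ 2 + α ^ 2 * pd (1, 0) u p ^ 2)) :=
      (pd_contDiff hgs _).continuous
    obtain ⟨C, hC⟩ :=
      ((isCompact_uIcc (a := (0:ℝ)) (b := L)).prod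
        (isCompact_Icc (a := t₀ - 1) (b := t₀ + 1))).exists_bound_of_continuousOn
        hcontg'.continuousOn
    have hcg : ∀ r : ℝ, Continuous fun x => u (x, r) ^ 2 + α ^ 2 * pd (1, 0) u (x, r) ^ 2 :=
      fun r => hgs.continuous.comp (continuous_id.prodMk continuous_const)
    have main := intervalIntegral.hasDerivAt_integral_of_dominated_loc_of_deriv_le
      (μ := volume) (a := (0:ℝ)) (b := L)
      (F := fun r x => u (x, r) ^ 2 + α ^ 2 * pd (1, 0) u (x, r) ^ 2)
      (F' := fun r x =>
        pd (0, 1) (fun p : ℝ × ℝ => u p ^ 2 + α ^ 2 * pd (1, 0) u p ^ 2) (x, r))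
      (bound := fun _ => C) (s := Metric.ball t₀ 1) (Metric.ball_mem_nhds t₀ one_pos)
      (Filter.Eventually.of_forall fun r => (hcg r).aestronglyMeasurable)
      ((hcg t₀).intervalIntegrable 0 L)
      ((hcontg'.comp (continuous_id.prodMk continuous_const)).aestronglyMeasurable)
      (ae_of_all _ fun x hx r hr => by
        refine hC ((x, r)) ⟨Set.uIoc_subset_uIcc hx, ?_⟩
        have hr' : r ∈ Set.Ioo (t₀ - 1) (t₀ + 1) := by
          rwa [Real.ball_eq_Ioo] at hr
        exact Set.Ioo_subset_Icc_self hr')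
      (intervalIntegrable_const)
      (ae_of_all _ fun x hx r hr => hasDerivAt_slice_t hgs x r)
    have h2 := main.2
    rwa [hkey t₀] at h2
  have hconst :
      (∫ x in (0:ℝ)..L, (u (x, t) ^ 2 + α ^ 2 * pd (1, 0) u (x, t) ^ 2))
        = ∫ x in (0:ℝ)..L, (u (x, 0) ^ 2 + α ^ 2 * pd (1, 0) u (x, 0) ^ 2) :=
    is_const_of_deriv_eq_zero (fun r => (hE r).differentiableAt) (fun r => (hE r).deriv) t 0
  simp only [hder]
  rw [hconst]
end

section
/- Let C₁, C₂ ∈ ℝ with 2C₁ + C₂ > 0, let f(φ) = 2(φ − C₁)²(φ + C₂/2), and let C₃ ∈ (0, (2C₁ + C₂)³/27). Then the equation f(φ) = C₃ has exactly three real roots φ₁ < φ₂ < φ₃, and they satisfy the ordering −C₂/2 < φ₁ < (C₁ − C₂)/3 < φ₂ < C₁ < φ₃. -/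
/-!
The cubic `f φ = 2 (φ - C₁)² (φ + C₂/2)` vanishes at `-C₂/2` and at `C₁`, takes its local maximum
`(2C₁ + C₂)³/27` at `m = (C₁ - C₂)/3` in between, and tends to `+∞`. For `C₃` strictly between `0` and
that maximum, the intermediate value theorem gives a root of `f = C₃` in each of `(-C₂/2, m)`,
`(m, C₁)` and `(C₁, ∞)`. A cubic has no further roots: a monic cubic vanishing at three distinct
points is the product of the three linear factors.
-/

theorem cubic_eq_mul_of_roots {R : Type*} [CommRing R] [IsDomain R] {a b c r₁ r₂ r₃ : R}
    (h₁₂ : r₁ ≠ r₂) (h₁₃ : r₁ ≠ r₃) (h₂₃ : r₂ ≠ r₃)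
    (h₁ : r₁ ^ 3 + a * r₁ ^ 2 + b * r₁ + c = 0) (h₂ : r₂ ^ 3 + a * r₂ ^ 2 + b * r₂ + c = 0)
    (h₃ : r₃ ^ 3 + a * r₃ ^ 2 + b * r₃ + c = 0) (x : R) :
    x ^ 3 + a * x ^ 2 + b * x + c = (x - r₁) * (x - r₂) * (x - r₃) := by
  -- divided differences of the cubic through the three roots
  have e₁₂ : r₁ ^ 2 + r₁ * r₂ + r₂ ^ 2 + a * (r₁ + r₂) + b = 0 :=
    (mul_eq_zero.mp (by linear_combination h₁ - h₂ :
      (r₁ - r₂) * (r₁ ^ 2 + r₁ * r₂ + r₂ ^ 2 + a * (r₁ + r₂) + b) = 0)).resolve_left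
      (sub_ne_zero.mpr h₁₂)
  have e₁₃ : r₁ ^ 2 + r₁ * r₃ + r₃ ^ 2 + a * (r₁ + r₃) + b = 0 :=
    (mul_eq_zero.mp (by linear_combination h₁ - h₃ :
      (r₁ - r₃) * (r₁ ^ 2 + r₁ * r₃ + r₃ ^ 2 + a * (r₁ + r₃) + b) = 0)).resolve_left
      (sub_ne_zero.mpr h₁₃)
  have ha : r₁ + r₂ + r₃ + a = 0 :=
    (mul_eq_zero.mp (by linear_combination e₁₂ - e₁₃ :
      (r₂ - r₃) * (r₁ + r₂ + r₃ + a) = 0)).resolve_left (sub_ne_zero.mpr h₂₃)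
  have hb : b = r₁ * r₂ + r₁ * r₃ + r₂ * r₃ := by linear_combination e₁₂ - (r₁ + r₂) * ha
  have hc : c = -(r₁ * r₂ * r₃) := by linear_combination h₁ - r₁ ^ 2 * ha - r₁ * hb
  linear_combination x ^ 2 * ha + x * hb + hc

noncomputable def dghCubic (C₁ C₂ φ : ℝ) : ℝ := 2 * (φ - C₁) ^ 2 * (φ + C₂ / 2)

namespace dghCubic

variable {C₁ C₂ : ℝ}

theorem continuous : Continuous (dghCubic C₁ C₂) := by
  unfold dghCubic; fun_prop

theorem apply_neg_half : dghCubic C₁ C₂ (-C₂ / 2) = 0 := by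
  unfold dghCubic; ring

theorem apply_self : dghCubic C₁ C₂ C₁ = 0 := by
  unfold dghCubic; ring

theorem apply_critical : dghCubic C₁ C₂ ((C₁ - C₂) / 3) = (2 * C₁ + C₂) ^ 3 / 27 := by
  unfold dghCubic; ring

theorem lt_apply_add (h : 0 < 2 * C₁ + C₂) {y : ℝ} (hy : 0 ≤ y) :
    y < dghCubic C₁ C₂ (C₁ + (1 + y)) := by
  have hpos : 0 < C₁ + C₂ / 2 := by linarith
  have ht : (0 : ℝ) < 1 + y := by positivity
  -- with `t = 1 + y ≥ 1`, the value is `2 t² (C₁ + C₂/2 + t) > 2 t³ ≥ t > y`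
  unfold dghCubic
  nlinarith [mul_pos (mul_pos hpos ht) ht, mul_nonneg (mul_nonneg hy hy) hy, mul_nonneg hy hy]

theorem sub_eq_mul_of_roots {C₃ φ₁ φ₂ φ₃ : ℝ} (h₁₂ : φ₁ ≠ φ₂) (h₁₃ : φ₁ ≠ φ₃) (h₂₃ : φ₂ ≠ φ₃)
    (h₁ : dghCubic C₁ C₂ φ₁ = C₃) (h₂ : dghCubic C₁ C₂ φ₂ = C₃) (h₃ : dghCubic C₁ C₂ φ₃ = C₃)
    (x : ℝ) : dghCubic C₁ C₂ x - C₃ = 2 * ((x - φ₁) * (x - φ₂) * (x - φ₃)) := by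
  unfold dghCubic at *
  have := cubic_eq_mul_of_roots (a := C₂ / 2 - 2 * C₁) (b := C₁ ^ 2 - C₁ * C₂)
    (c := C₁ ^ 2 * C₂ / 2 - C₃ / 2) h₁₂ h₁₃ h₂₃ (by linear_combination h₁ / 2)
    (by linear_combination h₂ / 2) (by linear_combination h₃ / 2) x
  linear_combination 2 * this

end dghCubic

/-- For `2C₁ + C₂ > 0` and `0 < C₃ < (2C₁ + C₂)³/27`, the equation
`2(φ − C₁)²(φ + C₂/2) = C₃` has exactly three real roots `φ₁ < φ₂ < φ₃`, satisfying
`−C₂/2 < φ₁ < (C₁ − C₂)/3 < φ₂ < C₁ < φ₃`. -/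
theorem dgh_cubic_three_roots
    (C₁ C₂ C₃ : ℝ) (h : 0 < 2 * C₁ + C₂)
    (f : ℝ → ℝ) (hf : f = fun φ => 2 * (φ - C₁) ^ 2 * (φ + C₂ / 2))
    (hC₃ : C₃ ∈ Set.Ioo 0 ((2 * C₁ + C₂) ^ 3 / 27)) :
    ∃ φ₁ φ₂ φ₃ : ℝ,
      (∀ x : ℝ, f x = C₃ ↔ x = φ₁ ∨ x = φ₂ ∨ x = φ₃) ∧
      -C₂ / 2 < φ₁ ∧ φ₁ < (C₁ - C₂) / 3 ∧ (C₁ - C₂) / 3 < φ₂ ∧ φ₂ < C₁ ∧ C₁ < φ₃ := by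
  obtain rfl : f = dghCubic C₁ C₂ := hf
  have hcont {a b : ℝ} : ContinuousOn (dghCubic C₁ C₂) (Set.Icc a b) :=
    dghCubic.continuous.continuousOn
  obtain ⟨φ₁, ⟨hφ₁l, hφ₁u⟩, hφ₁⟩ := intermediate_value_Ioo (a := -C₂ / 2) (b := (C₁ - C₂) / 3)
    (by linarith) hcont (by rwa [dghCubic.apply_neg_half, dghCubic.apply_critical])
  obtain ⟨φ₂, ⟨hφ₂l, hφ₂u⟩, hφ₂⟩ := intermediate_value_Ioo' (a := (C₁ - C₂) / 3) (b := C₁)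
    (by linarith) hcont (by rwa [dghCubic.apply_self, dghCubic.apply_critical])
  obtain ⟨φ₃, ⟨hφ₃l, -⟩, hφ₃⟩ := intermediate_value_Ioo (a := C₁) (b := C₁ + (1 + C₃))
    (by linarith [hC₃.1]) hcont
    (by rw [dghCubic.apply_self]; exact ⟨hC₃.1, dghCubic.lt_apply_add h hC₃.1.le⟩)
  refine ⟨φ₁, φ₂, φ₃, fun x => ?_, hφ₁l, hφ₁u, hφ₂l, hφ₂u, hφ₃l⟩
  rw [← sub_eq_zero, dghCubic.sub_eq_mul_of_roots (by linarith) (by linarith) (by linarith)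
    hφ₁ hφ₂ hφ₃ x]
  simp only [mul_eq_zero, two_ne_zero, sub_eq_zero, false_or, or_assoc]
end

section
/- Let β > 0 and 0 < η < β + 2. Then N(β, η) = (β + 2)(β + 2 + 2η) + (β + 2 − 2η)·√((β + 2)(β + 2 + 8η)) > 0. -/
/-!
With `a = β + 2`, the two summands `a (a + 2η)` and `(a - 2η) √(a (a + 8η))` have squares
differing by `32 a η² (a - η) > 0`, so the first (positive) one dominates the absolute value
of the second.
-/

open Real

lemma sq_sub_sq_mul_sqrt_eq (a η : ℝ) (h : 0 ≤ a * (a + 8 * η)) :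
    (a * (a + 2 * η)) ^ 2 - ((a - 2 * η) * √(a * (a + 8 * η))) ^ 2
      = 32 * a * η ^ 2 * (a - η) := by
  rw [mul_pow _ √_, sq_sqrt h]
  ring

lemma add_mul_sqrt_pos (a η : ℝ) (hη : 0 < η) (hηa : η < a) :
    0 < a * (a + 2 * η) + (a - 2 * η) * √(a * (a + 8 * η)) := by
  have ha : 0 < a := hη.trans hηa
  have hdiff := sq_sub_sq_mul_sqrt_eq a η (by positivity)
  have hgap : 0 < 32 * a * η ^ 2 * (a - η) := by
    have := sub_pos.mpr hηa
    positivity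
  have habs : |(a - 2 * η) * √(a * (a + 8 * η))| < a * (a + 2 * η) :=
    abs_lt_of_sq_lt_sq (by linarith) (by positivity)
  linarith [neg_abs_le ((a - 2 * η) * √(a * (a + 8 * η)))]

theorem dgh_N_positive_general (β η : ℝ) (hη : 0 < η) (hηβ : η < β + 2) :
    0 < (β + 2) * (β + 2 + 2 * η)
      + (β + 2 - 2 * η) * Real.sqrt ((β + 2) * (β + 2 + 8 * η)) :=
  add_mul_sqrt_pos (β + 2) η hη hηβ

/-- For `β > 0` and `0 < η < β + 2`, the quantity
`N(β, η) = (β + 2)(β + 2 + 2η) + (β + 2 − 2η)√((β + 2)(β + 2 + 8η))` is positive. -/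
theorem dgh_N_positive (β η : ℝ) (hβ : 0 < β) (hη : 0 < η) (hηβ : η < β + 2) :
    0 < (β + 2) * (β + 2 + 2 * η)
      + (β + 2 - 2 * η) * Real.sqrt ((β + 2) * (β + 2 + 8 * η)) :=
  dgh_N_positive_general β η hη hηβ
end

section
/- Let C₁, C₂ ∈ ℝ and define b : (0, ∞) → ℝ by b(L) = −(8C₁² + 12C₁C₂ + C₂² + (4C₁ − C₂)C₂·cosh L)/(16·cosh²(L/2)). Then for every L > 0, b'(L) = (2C₁ + C₂)²·sinh⁴(L/2)/sinh³(L); hence if 2C₁ + C₂ ≠ 0 then b is strictly increasing on (0, ∞); moreover b(L) → −C₁²/2 − C₁C₂ as L → 0⁺ and b(L) → (C₂² − 4C₁C₂)/8 as L → ∞. -/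
open Topology Filter

private lemma cosh_half_ne (L : ℝ) : Real.cosh (L / 2) ≠ 0 :=
  ne_of_gt (Real.cosh_pos (L / 2))

private lemma cosh_double (L : ℝ) : Real.cosh L = 2 * Real.cosh (L / 2) ^ 2 - 1 := by
  have h1 := Real.cosh_two_mul (L / 2)
  rw [show 2 * (L / 2) = L by ring] at h1
  have h2 := Real.cosh_sq (L / 2)
  linarith

private lemma b_eq (C₁ C₂ : ℝ) (L : ℝ) :
    -(8 * C₁ ^ 2 + 12 * C₁ * C₂ + C₂ ^ 2
      + (4 * C₁ - C₂) * C₂ * Real.cosh L) / (16 * (Real.cosh (L / 2)) ^ 2)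
    = (C₂ ^ 2 - 4 * C₁ * C₂) / 8 - (2 * C₁ + C₂) ^ 2 / (8 * (Real.cosh (L / 2)) ^ 2) := by
  rw [cosh_double L]
  have h := cosh_half_ne L
  field_simp
  ring

private lemma hasDeriv (C₁ C₂ : ℝ) (L : ℝ) :
    HasDerivAt (fun L => -(8 * C₁ ^ 2 + 12 * C₁ * C₂ + C₂ ^ 2
      + (4 * C₁ - C₂) * C₂ * Real.cosh L) / (16 * (Real.cosh (L / 2)) ^ 2))
      ((2 * C₁ + C₂) ^ 2 * Real.sinh (L / 2) / (8 * (Real.cosh (L / 2)) ^ 3)) L := by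
  have heq : (fun L => -(8 * C₁ ^ 2 + 12 * C₁ * C₂ + C₂ ^ 2
      + (4 * C₁ - C₂) * C₂ * Real.cosh L) / (16 * (Real.cosh (L / 2)) ^ 2))
      = (fun L => (C₂ ^ 2 - 4 * C₁ * C₂) / 8
        - (2 * C₁ + C₂) ^ 2 * (8 * (Real.cosh (L / 2)) ^ 2)⁻¹) := by
    funext L
    rw [b_eq C₁ C₂ L]; ring
  rw [heq]
  have h1 : HasDerivAt (fun L : ℝ => Real.cosh (L / 2)) (Real.sinh (L / 2) * (1 / 2)) L := by
    have := (Real.hasDerivAt_cosh (L / 2)).comp L ((hasDerivAt_id L).div_const 2)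
    simpa [Function.comp_def] using this
  have h2 : HasDerivAt (fun L : ℝ => 8 * (Real.cosh (L / 2)) ^ 2)
      (8 * ((2 : ℕ) * Real.cosh (L / 2) ^ 1 * (Real.sinh (L / 2) * (1 / 2)))) L :=
    (h1.pow 2).const_mul 8
  have hne : (8 : ℝ) * (Real.cosh (L / 2)) ^ 2 ≠ 0 := by
    positivity
  have h3 := ((h2.inv hne).const_mul ((2 * C₁ + C₂) ^ 2)).const_sub
      ((C₂ ^ 2 - 4 * C₁ * C₂) / 8)
  refine h3.congr_deriv ?_
  have h := cosh_half_ne L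
  field_simp
  ring

/-- For `b(L) = −(8C₁² + 12C₁C₂ + C₂² + (4C₁ − C₂)C₂ cosh L)/(16 cosh²(L/2))`, one has
`b'(L) = (2C₁ + C₂)² sinh⁴(L/2)/sinh³(L)` for `L > 0`; hence `b` is strictly increasing
on `(0, ∞)` when `2C₁ + C₂ ≠ 0`, with `b(L) → −C₁²/2 − C₁C₂` as `L → 0⁺` and
`b(L) → (C₂² − 4C₁C₂)/8` as `L → ∞`. -/
theorem dgh_peaked_b_monotone
    (C₁ C₂ : ℝ)
    (b : ℝ → ℝ)
    (hb : b = fun L => -(8 * C₁ ^ 2 + 12 * C₁ * C₂ + C₂ ^ 2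
      + (4 * C₁ - C₂) * C₂ * Real.cosh L) / (16 * (Real.cosh (L / 2)) ^ 2)) :
    (∀ L : ℝ, 0 < L →
      deriv b L = (2 * C₁ + C₂) ^ 2 * (Real.sinh (L / 2)) ^ 4 / (Real.sinh L) ^ 3) ∧
    (2 * C₁ + C₂ ≠ 0 → StrictMonoOn b (Set.Ioi 0)) ∧
    Tendsto b (𝓝[>] 0) (𝓝 (-C₁ ^ 2 / 2 - C₁ * C₂)) ∧
    Tendsto b atTop (𝓝 ((C₂ ^ 2 - 4 * C₁ * C₂) / 8)) := by
  subst hb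
  have hderiv : ∀ L : ℝ, 0 < L →
      deriv (fun L => -(8 * C₁ ^ 2 + 12 * C₁ * C₂ + C₂ ^ 2
        + (4 * C₁ - C₂) * C₂ * Real.cosh L) / (16 * (Real.cosh (L / 2)) ^ 2)) L
      = (2 * C₁ + C₂) ^ 2 * (Real.sinh (L / 2)) ^ 4 / (Real.sinh L) ^ 3 := by
    intro L hL
    rw [(hasDeriv C₁ C₂ L).deriv]
    have hs : Real.sinh (L / 2) ≠ 0 := by
      have := Real.sinh_pos_iff.2 (by linarith : (0:ℝ) < L / 2)
      linarith
    have hsL : Real.sinh L = 2 * Real.sinh (L / 2) * Real.cosh (L / 2) := by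
      have := Real.sinh_two_mul (L / 2)
      rwa [show 2 * (L / 2) = L by ring] at this
    rw [hsL]
    have hc := cosh_half_ne L
    field_simp
    ring
  refine ⟨hderiv, ?_, ?_, ?_⟩
  · intro hne
    apply strictMonoOn_of_deriv_pos (convex_Ioi 0)
    · apply Continuous.continuousOn
      apply Continuous.div
      · fun_prop
      · fun_prop
      · intro x
        have := cosh_half_ne x
        positivity
    · intro L hL
      rw [interior_Ioi] at hL
      have hL : (0:ℝ) < L := hL
      rw [hderiv L hL]
      have hs : 0 < Real.sinh (L / 2) := Real.sinh_pos_iff.2 (by linarith : (0:ℝ) < L / 2)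
      have hsL : 0 < Real.sinh L := Real.sinh_pos_iff.2 hL
      have hK : 0 < (2 * C₁ + C₂) ^ 2 := by positivity
      positivity
  · apply tendsto_nhdsWithin_of_tendsto_nhds
    have hcont : ContinuousAt (fun L => -(8 * C₁ ^ 2 + 12 * C₁ * C₂ + C₂ ^ 2
        + (4 * C₁ - C₂) * C₂ * Real.cosh L) / (16 * (Real.cosh (L / 2)) ^ 2)) 0 := by
      apply ContinuousAt.div
      · fun_prop
      · fun_prop
      · have := cosh_half_ne 0
        positivity
    have := hcont.tendsto
    convert this using 2
    simp [Real.cosh_zero]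
    ring
  · have hrw : (fun L => -(8 * C₁ ^ 2 + 12 * C₁ * C₂ + C₂ ^ 2
        + (4 * C₁ - C₂) * C₂ * Real.cosh L) / (16 * (Real.cosh (L / 2)) ^ 2))
        = (fun L => (C₂ ^ 2 - 4 * C₁ * C₂) / 8
          - (2 * C₁ + C₂) ^ 2 / (8 * (Real.cosh (L / 2)) ^ 2)) := by
      funext L; exact b_eq C₁ C₂ L
    rw [hrw]
    have h0 : Tendsto (fun L : ℝ => (2 * C₁ + C₂) ^ 2 / (8 * (Real.cosh (L / 2)) ^ 2))
        atTop (𝓝 0) := by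
      apply Tendsto.div_atTop tendsto_const_nhds
      apply Tendsto.const_mul_atTop (by norm_num : (0:ℝ) < 8)
      have hcosh : Tendsto Real.cosh atTop atTop := by
        apply tendsto_atTop_mono (fun x => ?_)
          ((Real.tendsto_exp_atTop).atTop_div_const (by norm_num : (0:ℝ) < 2))
        rw [Real.cosh_eq]
        have := Real.exp_pos (-x)
        linarith
      have hc2 : Tendsto (fun L : ℝ => Real.cosh (L / 2)) atTop atTop :=
        hcosh.comp (tendsto_id.atTop_div_const (by norm_num : (0:ℝ) < 2))
      exact (tendsto_pow_atTop (by norm_num : (2:ℕ) ≠ 0)).comp hc2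
    have := (tendsto_const_nhds (x := (C₂ ^ 2 - 4 * C₁ * C₂) / 8) (f := atTop)).sub h0
    simpa using this
end

section
/- Let α > 0, C₁, C₂, b ∈ ℝ, and let φ : ℝ → ℝ be a twice continuously differentiable function satisfying α²(φ − C₁)φ'' + (1/2)α²(φ')² + (C₁ − C₂ − (3/2)φ)φ = b on ℝ. Define Y = φ + C₂/2. Then for every x ∈ ℝ, −α²·d/dx[(C₁ − φ(x))Y'(x)] + (C₁ − C₂ − 3φ(x) + α²φ''(x))·Y(x) = 2b + (C₂/2)(C₁ − C₂) − (C₁ + C₂/2)φ(x) + (C₁ + C₂/2)α²φ''(x); that is, 𝓛Y = 2b + (C₂/2)(C₁ − C₂) − (C₁ + C₂/2)(φ − α²φ''), where 𝓛 = −α²∂ₓ(C₁ − φ)∂ₓ + (C₁ − C₂ − 3φ + α²φ''). -/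
/-- For `Y = φ + C₂/2`, the linearized operator satisfies
`𝓛Y = 2b + (C₂/2)(C₁ − C₂) − (C₁ + C₂/2)(φ − α²φ'')`, where
`𝓛 = −α²∂ₓ(C₁ − φ)∂ₓ + (C₁ − C₂ − 3φ + α²φ'')` and `φ` satisfies the travelling-wave
equation `α²(φ − C₁)φ'' + (1/2)α²(φ')² + (C₁ − C₂ − (3/2)φ)φ = b`. -/
theorem dgh_L_applied_to_Y
    (α C₁ C₂ b : ℝ) (hα : 0 < α)
    (φ : ℝ → ℝ) (hφ : ContDiff ℝ 2 φ)
    (hODE : ∀ x : ℝ,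
      α ^ 2 * (φ x - C₁) * deriv (deriv φ) x
        + (1 / 2) * α ^ 2 * (deriv φ x) ^ 2
        + (C₁ - C₂ - (3 / 2) * φ x) * φ x = b)
    (Y : ℝ → ℝ) (hY : Y = fun x => φ x + C₂ / 2) :
    ∀ x : ℝ,
      -α ^ 2 * deriv (fun y => (C₁ - φ y) * deriv Y y) x
        + (C₁ - C₂ - 3 * φ x + α ^ 2 * deriv (deriv φ) x) * Y x
      = 2 * b + (C₂ / 2) * (C₁ - C₂) - (C₁ + C₂ / 2) * φ x
        + (C₁ + C₂ / 2) * α ^ 2 * deriv (deriv φ) x := by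
  intro x
  have hd1 : Differentiable ℝ φ := hφ.differentiable (by norm_num)
  have hd2 : Differentiable ℝ (deriv φ) := by
    have h : ContDiff ℝ ((1 : ℕ∞) + 1) φ := by exact_mod_cast hφ
    exact ((contDiff_succ_iff_deriv.mp h).2.2).differentiable (by norm_num)
  have hYd : deriv Y = deriv φ := by
    funext y
    rw [hY]
    simp [deriv_add_const]
  have hfun : (fun y => (C₁ - φ y) * deriv Y y) = fun y => (C₁ - φ y) * deriv φ y := by
    rw [hYd]
  have hder : deriv (fun y => (C₁ - φ y) * deriv φ y) x
      = -(deriv φ x) * deriv φ x + (C₁ - φ x) * deriv (deriv φ) x := by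
    rw [deriv_fun_mul (c := fun y => C₁ - φ y) ((differentiable_const C₁).sub hd1).differentiableAt (hd2 x)]
    rw [deriv_const_sub]
  rw [hfun, hder, hY]
  have h := hODE x
  nlinarith [h, sq_nonneg (deriv φ x)]
end
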